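/- arXiv:cs/0507001 — 4 statements merged into one kernel-verified Lean document; each statement's English description precedes it below -/
import Mathlib

section
/- In a weighted binary tree in which every pair of sibling nodes X, S satisfies |P_X − P_S| ≤ P_max (where a node's weight equals the sum of the weights of its two children), for any node X at depth d_X from the root, the total root weight satisfies P_root ≥ 2^{d_X} (P_X − P_max) + P_max. -/
open Real

/-- A finite binary tree with real weights at the leaves. -/
inductive BTree where
  | leaf : ℝ → BTree
  | node : BTree → BTree → BTree

namespace BTree

/-- The weight of a node: a leaf's weight, or the sum of the children's weights. -/
def wt : BTree → ℝ
  | leaf w => w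
  | node l r => l.wt + r.wt

/-- All leaf weights are positive. -/
def PosLeaves : BTree → Prop
  | leaf w => 0 < w
  | node l r => l.PosLeaves ∧ r.PosLeaves

/-- Every pair of sibling nodes has weights differing by at most `c`. -/
def SibBound (c : ℝ) : BTree → Prop
  | leaf _ => True
  | node l r => |l.wt - r.wt| ≤ c ∧ l.SibBound c ∧ r.SibBound c

/-- `SubtreeAt t d s` : `s` occurs as a subtree (node) of `t` at depth `d`
(number of edges from the root of `t`). -/
inductive SubtreeAt : BTree → ℕ → BTree → Prop
  | refl (t : BTree) : SubtreeAt t 0 t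
  | left {l r s : BTree} {d : ℕ} : SubtreeAt l d s → SubtreeAt (node l r) (d + 1) s
  | right {l r s : BTree} {d : ℕ} : SubtreeAt r d s → SubtreeAt (node l r) (d + 1) s

end BTree

theorem root_weight_lower_bound (Pmax : ℝ) (hPmax : 0 < Pmax)
    (t : BTree) (hpos : t.PosLeaves) (hsib : t.SibBound Pmax)
    (X : BTree) (dX : ℕ) (hsub : BTree.SubtreeAt t dX X) :
    t.wt ≥ 2 ^ dX * (X.wt - Pmax) + Pmax := by
  induction hsub with
  | refl t => simp
  | @left l r s d h ih =>
    obtain ⟨hb, hl, hr⟩ := hsib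
    have ihl := ih hpos.1 hl
    have : r.wt ≥ l.wt - Pmax := by
      have := abs_le.mp hb; linarith [this.1, this.2]
    simp only [BTree.wt]
    have h2 : (2:ℝ) ^ (d+1) = 2 * 2 ^ d := by ring
    rw [h2]; nlinarith
  | @right l r s d h ih =>
    obtain ⟨hb, hl, hr⟩ := hsib
    have ihr := ih hpos.2 hr
    have : l.wt ≥ r.wt - Pmax := by
      have := abs_le.mp hb; linarith [this.1, this.2]
    simp only [BTree.wt]
    have h2 : (2:ℝ) ^ (d+1) = 2 * 2 ^ d := by ring
    rw [h2]; nlinarith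
end

section
/- In a weighted binary tree where sibling weights differ by at most P_max, any node X at depth d_X satisfies d_X ≤ log₂ P_G + log₂(1 − P_max/P_G) − log₂(P_X − P_max), provided P_X > P_max and P_G > P_max, where P_G is the root weight. -/
open Real

lemma BTree.wt_pos : ∀ t : BTree, t.PosLeaves → 0 < t.wt
  | .leaf w, h => h
  | .node l r, h => by
      have := BTree.wt_pos l h.1
      have := BTree.wt_pos r h.2
      simp only [BTree.wt]; linarith

lemma key (Pmax : ℝ) {t s : BTree} {d : ℕ} (hsub : BTree.SubtreeAt t d s)
    (hsib : t.SibBound Pmax) : (s.wt - Pmax) * 2 ^ d ≤ t.wt - Pmax := by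
  induction hsub with
  | refl t => simp
  | left h ih =>
      rename_i l r s d
      obtain ⟨hab, hl, hr⟩ := hsib
      have ih := ih hl
      have h1 : l.wt - r.wt ≤ Pmax := (abs_le.mp hab).2
      have : (s.wt - Pmax) * 2 ^ (d + 1) = ((s.wt - Pmax) * 2 ^ d) * 2 := by ring
      rw [this]
      simp only [BTree.wt]
      nlinarith
  | right h ih =>
      rename_i l r s d
      obtain ⟨hab, hl, hr⟩ := hsib
      have ih := ih hr
      have h1 : -(Pmax) ≤ l.wt - r.wt := (abs_le.mp hab).1
      have : (s.wt - Pmax) * 2 ^ (d + 1) = ((s.wt - Pmax) * 2 ^ d) * 2 := by ring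
      rw [this]
      simp only [BTree.wt]
      nlinarith

theorem depth_upper_bound (Pmax : ℝ) (t0 : BTree)
    (hpos : t0.PosLeaves) (hsib : t0.SibBound Pmax)
    (X : BTree) (dX : ℕ) (hsub : BTree.SubtreeAt t0 dX X)
    (hX : X.wt > Pmax) (hG : t0.wt > Pmax) :
    (dX : ℝ) ≤ Real.logb 2 t0.wt + Real.logb 2 (1 - Pmax / t0.wt)
      - Real.logb 2 (X.wt - Pmax) := by
  have hkey := key Pmax hsub hsib
  have ht0 : 0 < t0.wt := t0.wt_pos hpos
  have hXp : 0 < X.wt - Pmax := by linarith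
  have hGp : 0 < t0.wt - Pmax := by linarith
  have hpow : (2 : ℝ) ^ dX ≤ (t0.wt - Pmax) / (X.wt - Pmax) := by
    rw [le_div_iff₀ hXp]; nlinarith
  have h1 : (dX : ℝ) ≤ Real.logb 2 ((t0.wt - Pmax) / (X.wt - Pmax)) := by
    have := Real.logb_le_logb_of_le (by norm_num : (1:ℝ) < 2) (by positivity : (0:ℝ) < 2 ^ dX) hpow
    rwa [Real.logb_pow, Real.logb_self_eq_one (by norm_num), mul_one] at this
  have h2 : Real.logb 2 ((t0.wt - Pmax) / (X.wt - Pmax))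
      = Real.logb 2 (t0.wt - Pmax) - Real.logb 2 (X.wt - Pmax) :=
    Real.logb_div (by linarith) (by linarith)
  have h3 : Real.logb 2 t0.wt + Real.logb 2 (1 - Pmax / t0.wt)
      = Real.logb 2 (t0.wt - Pmax) := by
    rw [← Real.logb_mul (by linarith) (by
        have : 1 - Pmax / t0.wt = (t0.wt - Pmax) / t0.wt := by field_simp
        rw [this]; positivity)]
    congr 1
    field_simp
  rw [h3, ← h2]
  exact h1
end

section
/- Suppose every sibling pair in a weighted binary tree satisfies |P_X − P_S| ≤ P_max. If a new leaf M with weight P_M is inserted at node X (creating a new parent N of X and M, where X previously had sibling S, and all ancestors of N gain weight P_M), and insertion only occurs when P_M ≥ P_{X_l} and P_M ≥ P_{X_r} for the children X_l, X_r of X, then in the new tree every sibling pair (A, B) satisfies |P_A − P_B| ≤ max{P_max, P_M}. -/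
open Real

namespace BTree

/-- `Ins pm t t'` : the key tree `t'` results from inserting a new member leaf of
weight `pm` into the tree `t` following the Selçuk–Sidhu descent rule:
the new member is inserted at an internal node `X` (creating a new parent whose
children are `X` and the new member) only when `pm` is at least the weight of both
children of `X`; otherwise the algorithm descends into the lighter child. -/
inductive Ins (pm : ℝ) : BTree → BTree → Prop
  | here {l r : BTree} :
      pm ≥ l.wt → pm ≥ r.wt →
      Ins pm (node l r) (node (node l r) (leaf pm))
  | left {l l' r : BTree} :
      r.wt ≥ l.wt → ¬(pm ≥ l.wt ∧ pm ≥ r.wt) →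
      Ins pm l l' → Ins pm (node l r) (node l' r)
  | right {l r r' : BTree} :
      l.wt ≥ r.wt → ¬(pm ≥ l.wt ∧ pm ≥ r.wt) →
      Ins pm r r' → Ins pm (node l r) (node l r')

end BTree

namespace BTree

theorem wt_pos_s10 {t : BTree} (h : t.PosLeaves) : 0 < t.wt := by
  induction t with
  | leaf w => exact h
  | node l r ihl ihr => exact add_pos (ihl h.1) (ihr h.2)

theorem Ins.wt_eq {pm : ℝ} {t t' : BTree} (h : BTree.Ins pm t t') :
    t'.wt = t.wt + pm := by
  induction h with
  | here _ _ => simp [wt]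
  | left _ _ _ ih => simp [wt, ih]; ring
  | right _ _ _ ih => simp [wt, ih]; ring

theorem SibBound.mono {c c' : ℝ} (hcc : c ≤ c') {t : BTree} (h : t.SibBound c) :
    t.SibBound c' := by
  induction t with
  | leaf w => trivial
  | node l r ihl ihr => exact ⟨h.1.trans hcc, ihl h.2.1, ihr h.2.2⟩

end BTree

theorem insertion_preserves_sibling_bound
    (Pmax pm : ℝ) (hPmax : 0 < Pmax) (hpm : 0 < pm)
    (t t' : BTree) (hpos : t.PosLeaves)
    (hsib : t.SibBound Pmax) (hins : BTree.Ins pm t t') :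
    t'.SibBound (max Pmax pm) := by
  induction hins with
  | @here l r hl hr =>
    have hlw := BTree.wt_pos_s10 hpos.1
    have hrw := BTree.wt_pos_s10 hpos.2
    refine ⟨?_, hsib.mono (le_max_left _ _), trivial⟩
    have : |BTree.wt (l.node r) - (BTree.leaf pm).wt| ≤ pm := by
      simp only [BTree.wt]
      rw [abs_le]; constructor <;> linarith
    exact this.trans (le_max_right _ _)
  | @left l l' r hge _ _ ih =>
    have hl'w : l'.wt = l.wt + pm := by
      rename_i hins'; exact hins'.wt_eq
    refine ⟨?_, ih hpos.1 hsib.2.1, hsib.2.2.mono (le_max_left _ _)⟩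
    have hb : |l.wt - r.wt| ≤ Pmax := hsib.1
    rw [abs_le] at hb ⊢
    constructor
    · have : -Pmax ≤ max Pmax pm := le_trans (by linarith) (le_max_left _ _)
      rw [hl'w]; linarith [le_max_left Pmax pm]
    · rw [hl'w]; linarith [le_max_right Pmax pm]
  | @right l r r' hge _ _ ih =>
    have hr'w : r'.wt = r.wt + pm := by
      rename_i hins'; exact hins'.wt_eq
    refine ⟨?_, hsib.2.1.mono (le_max_left _ _), ih hpos.2 hsib.2.2⟩
    have hb : |l.wt - r.wt| ≤ Pmax := hsib.1
    rw [abs_le] at hb ⊢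
    constructor
    · rw [hr'w]; linarith [le_max_right Pmax pm]
    · rw [hr'w]; linarith [le_max_left Pmax pm]
end

section
/- Let P_G > 0, P_max > 0, P_min > 0 with P_min ≤ P_M ≤ P_max for all M, and suppose each leaf depth satisfies d_M < log₂ P_G − K₁ log₂ P_M + (K₁ − 1) log₂ P_max + log₂(1 − P_max/P_G) + K₃ for constants K₁, K₃ with K₁ > 1. Then the weighted average l = Σ (P_M/P_G) d_M satisfies l < H(P) + (K₁ − 1) log₂(P_max/P_min) + log₂(1 − P_max/P_G) + K₃. -/
open Finset Real

theorem average_withdrawal_cost_bound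
    {G : Type*} [Fintype G] [Nonempty G]
    (P : G → ℝ) (d : G → ℕ) (Pmin Pmax K₁ K₃ : ℝ)
    (hPmin : 0 < Pmin) (hPmax : 0 < Pmax) (hK₁ : 1 < K₁)
    (hlow : ∀ M, Pmin ≤ P M) (hhigh : ∀ M, P M ≤ Pmax)
    (PG : ℝ) (hPG : PG = ∑ M, P M) (hPGpos : 0 < PG)
    (hd : ∀ M, (d M : ℝ) < Real.logb 2 PG - K₁ * Real.logb 2 (P M)
          + (K₁ - 1) * Real.logb 2 Pmax + Real.logb 2 (1 - Pmax / PG) + K₃) :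
    ∑ M, (P M / PG) * (d M : ℝ) <
      (-∑ M, (P M / PG) * Real.logb 2 (P M / PG))
        + (K₁ - 1) * Real.logb 2 (Pmax / Pmin)
        + Real.logb 2 (1 - Pmax / PG) + K₃ := by
  have hPpos : ∀ M, 0 < P M := fun M => lt_of_lt_of_le hPmin (hlow M)
  have hppos : ∀ M, 0 < P M / PG := fun M => div_pos (hPpos M) hPGpos
  have hsum1 : ∑ M, P M / PG = 1 := by
    rw [← Finset.sum_div, ← hPG, div_self hPGpos.ne']
  have h1 : ∑ M, (P M / PG) * (d M : ℝ) <
      ∑ M, (P M / PG) * (Real.logb 2 PG - K₁ * Real.logb 2 (P M)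
          + (K₁ - 1) * Real.logb 2 Pmax + Real.logb 2 (1 - Pmax / PG) + K₃) := by
    refine Finset.sum_lt_sum_of_nonempty Finset.univ_nonempty fun M _ => ?_
    exact mul_lt_mul_of_pos_left (hd M) (hppos M)
  have h2 : ∑ M, (P M / PG) * (Real.logb 2 PG - K₁ * Real.logb 2 (P M)
          + (K₁ - 1) * Real.logb 2 Pmax + Real.logb 2 (1 - Pmax / PG) + K₃) ≤
      ∑ M, ((P M / PG) * (- Real.logb 2 (P M / PG)) +
        (P M / PG) * ((K₁ - 1) * Real.logb 2 (Pmax / Pmin)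
          + Real.logb 2 (1 - Pmax / PG) + K₃)) := by
    refine Finset.sum_le_sum fun M _ => ?_
    rw [← mul_add]
    refine mul_le_mul_of_nonneg_left ?_ (hppos M).le
    have e1 : Real.logb 2 (P M / PG) = Real.logb 2 (P M) - Real.logb 2 PG :=
      Real.logb_div (hPpos M).ne' hPGpos.ne'
    have e2 : Real.logb 2 (Pmax / Pmin) = Real.logb 2 Pmax - Real.logb 2 Pmin :=
      Real.logb_div hPmax.ne' hPmin.ne'
    have e3 : Real.logb 2 Pmin ≤ Real.logb 2 (P M) :=
      (Real.logb_le_logb (by norm_num) hPmin (hPpos M)).mpr (hlow M)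
    nlinarith [e3, hK₁]
  calc ∑ M, (P M / PG) * (d M : ℝ) < _ := h1
    _ ≤ _ := h2
    _ = (-∑ M, (P M / PG) * Real.logb 2 (P M / PG))
        + (K₁ - 1) * Real.logb 2 (Pmax / Pmin)
        + Real.logb 2 (1 - Pmax / PG) + K₃ := by
      rw [Finset.sum_add_distrib, ← Finset.sum_mul, hsum1]
      simp [mul_neg, Finset.sum_neg_distrib]
      ring
end
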